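/- The limit as m → ∞ (with n = 4m+2) of 4·(∑_{k=1}^{(n-2)/4} (cos((2k-1)π/(2n-2)) − cos(kπ/(n+1))) + ∑_{k=(n+2)/4}^{n/2} (cos(kπ/(n+1)) − cos((2k-1)π/(2n-2)))) equals (8 − 8√2 + 2π)/π. -/

import Mathlib

open Real Filter Finset

open Topology

/-!
Put `a = π / (8m + 2)` and `c = π / (8m + 6)`, so the two sums are sums of `cos ((2k - 1) a)`
and `cos (2k c)`. Multiplied by `2 sin a`, resp. `2 sin c`, they telescope, and the endpoints
of the telescoped sums sit at `π / 4` and `π / 2` up to `O(a)`, so the quantity becomes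
`2 + 2 (sinRatio a - sinRatio c) + 2 sin a / (1 + cos a)`. Both `sinRatio a` and `sinRatio c`
blow up like `(√2 - 1) / x`, but `sinRatio x - (√2 - 1) / x` converges as `x → 0⁺` (because
`1 / sin x - 1 / x → 0`) and `1 / a - 1 / c = -4 / π` exactly, so the difference tends to
`-4 (√2 - 1) / π`.
-/

theorem two_mul_sin_mul_sum_cos (x t : ℝ) (N : ℕ) :
    2 * sin x * ∑ k ∈ Icc 1 N, cos (2 * k * x + t) = sin ((2 * N + 1) * x + t) - sin (x + t) := by
  induction N with
  | zero => simp
  | succ N ih =>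
    have step := sin_sub_sin ((2 * (N + 1) + 1) * x + t) ((2 * N + 1) * x + t)
    rw [show ((2 * (N + 1) + 1) * x + t - ((2 * N + 1) * x + t)) / 2 = x by ring,
      show ((2 * (N + 1) + 1) * x + t + ((2 * N + 1) * x + t)) / 2 = 2 * (N + 1) * x + t by ring]
      at step
    rw [sum_Icc_succ_top (by omega), mul_add, ih]
    push_cast
    linear_combination -step

theorem sum_Icc_add_one_eq_sub {M : Type*} [AddCommGroup M] (f : ℕ → M) {m n : ℕ} (h : m ≤ n) :
    ∑ k ∈ Icc (m + 1) n, f k = ∑ k ∈ Icc 1 n, f k - ∑ k ∈ Icc 1 m, f k := by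
  have hIcc (k : ℕ) : Icc 1 k = Ioc 0 k := Icc_add_one_left_eq_Ioc 0 k
  rw [hIcc, hIcc, Icc_add_one_left_eq_Ioc, ← sum_Ioc_consecutive f (Nat.zero_le m) h]
  abel

theorem mem_Ioc_of_mul_eq_pi {n a : ℝ} (hn : 2 ≤ n) (ha : n * a = π) : a ∈ Set.Ioc 0 (π / 2) := by
  have ha' : a = π / n := by rw [← ha]; field_simp
  subst ha'
  exact ⟨by positivity, div_le_div_of_nonneg_left pi_pos.le two_pos hn⟩

theorem sin_pos_of_mul_eq_pi {n a : ℝ} (hn : 2 ≤ n) (ha : n * a = π) : 0 < sin a :=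
  have ⟨h0, h1⟩ := mem_Ioc_of_mul_eq_pi hn ha
  sin_pos_of_pos_of_lt_pi h0 (by linarith [pi_pos])

theorem cos_nonneg_of_mul_eq_pi {n a : ℝ} (hn : 2 ≤ n) (ha : n * a = π) : 0 ≤ cos a :=
  have ⟨h0, h1⟩ := mem_Ioc_of_mul_eq_pi hn ha
  cos_nonneg_of_neg_pi_div_two_le_of_le (by linarith [pi_pos]) h1

noncomputable def sinRatio (x : ℝ) : ℝ := (2 * sin (π / 4 - x / 2) - 1) / sin x

theorem two_mul_sum_cos_odd_sub (m : ℕ) {a : ℝ} (ha : (8 * m + 2) * a = π) :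
    2 * ∑ k ∈ Icc 1 m, cos ((2 * k - 1) * a) - ∑ k ∈ Icc 1 (2 * m + 1), cos ((2 * k - 1) * a)
      = (sinRatio a + sin a / (1 + cos a)) / 2 := by
  have hn : (2 : ℝ) ≤ 8 * m + 2 := by linarith [(Nat.cast_nonneg m : (0 : ℝ) ≤ m)]
  have hsin := (sin_pos_of_mul_eq_pi hn ha).ne'
  have hsum (N : ℕ) : ∑ k ∈ Icc 1 N, cos ((2 * k - 1) * a) = sin (2 * N * a) / (2 * sin a) := by
    rw [eq_div_iff (by positivity), mul_comm]
    convert two_mul_sin_mul_sum_cos a (-a) N using 3 <;> ring_nf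
    rw [sin_zero, sub_zero]
  rw [hsum, hsum, sinRatio,
    show 2 * (m : ℝ) * a = π / 4 - a / 2 by linear_combination ha / 4,
    show 2 * ((2 * m + 1 : ℕ) : ℝ) * a = a + π / 2 by rw [← ha]; push_cast; ring,
    sin_add_pi_div_two]
  have hcos : 1 + cos a ≠ 0 := by linarith [cos_nonneg_of_mul_eq_pi hn ha]
  field_simp
  linear_combination -sin_sq_add_cos_sq a

theorem sum_cos_even_sub_two_mul (m : ℕ) {c : ℝ} (hc : (8 * m + 6) * c = π) :
    ∑ k ∈ Icc 1 (2 * m + 1), cos (2 * k * c) - 2 * ∑ k ∈ Icc 1 m, cos (2 * k * c)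
      = (1 - sinRatio c) / 2 := by
  have hn : (2 : ℝ) ≤ 8 * m + 6 := by linarith [(Nat.cast_nonneg m : (0 : ℝ) ≤ m)]
  have hsin := (sin_pos_of_mul_eq_pi hn hc).ne'
  have hsum (N : ℕ) :
      ∑ k ∈ Icc 1 N, cos (2 * k * c) = (sin ((2 * N + 1) * c) - sin c) / (2 * sin c) := by
    rw [eq_div_iff (by positivity), mul_comm]
    simpa using two_mul_sin_mul_sum_cos c 0 N
  rw [hsum, hsum, sinRatio,
    show (2 * (m : ℝ) + 1) * c = π / 4 - c / 2 by linear_combination hc / 4,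
    show (2 * ((2 * m + 1 : ℕ) : ℝ) + 1) * c = π / 2 by rw [← hc]; push_cast; ring,
    sin_pi_div_two]
  field_simp
  ring

theorem tendsto_inv_sin_sub_inv : Tendsto (fun x => (sin x)⁻¹ - x⁻¹) (𝓝[>] 0) (𝓝 0) := by
  have hbound : ∀ᶠ x in 𝓝[>] (0 : ℝ), 0 ≤ (sin x)⁻¹ - x⁻¹ ∧ (sin x)⁻¹ - x⁻¹ ≤ x := by
    filter_upwards [Ioo_mem_nhdsGT one_pos] with x ⟨hx0, hx1⟩
    have hlt := sin_lt hx0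
    have hgt := sin_gt_sub_cube hx0
    have hx3 : x ^ 3 < x := by nlinarith [mul_pos hx0 hx0]
    have hs : 0 < sin x := by linarith
    rw [inv_sub_inv hs.ne' hx0.ne', div_nonneg_iff, div_le_iff₀ (by positivity)]
    refine ⟨Or.inl ⟨by linarith, by positivity⟩, by nlinarith⟩
  exact tendsto_of_tendsto_of_tendsto_of_le_of_le' tendsto_const_nhds
    (tendsto_nhdsWithin_of_tendsto_nhds tendsto_id) (hbound.mono fun _ h => h.1)
    (hbound.mono fun _ h => h.2)

theorem tendsto_sinRatio_sub_inv :
    Tendsto (fun x => sinRatio x - (√2 - 1) / x) (𝓝[>] 0) (𝓝 (-(√2 / 2))) := by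
  have hhalf : Tendsto (fun x : ℝ => x / 2) (𝓝[>] 0) (𝓝[>] 0) :=
    tendsto_nhdsWithin_of_tendsto_nhds_of_eventually_within _
      ((continuous_id.div_const 2).tendsto' 0 0 (zero_div 2) |>.mono_left nhdsWithin_le_nhds)
      (eventually_nhdsWithin_of_forall fun _ hx => Set.mem_Ioi.2 (half_pos hx))
  have hcos : Tendsto (fun x : ℝ => cos (x / 2)) (𝓝[>] 0) (𝓝 1) :=
    (continuous_cos.tendsto' 0 1 cos_zero).comp (hhalf.mono_right nhdsWithin_le_nhds)
  have hlim := ((tendsto_inv_sin_sub_inv.comp hhalf).const_mul (√2 / 2)).sub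
    tendsto_inv_sin_sub_inv |>.sub ((tendsto_const_nhds (x := √2 / 2)).div hcos one_ne_zero)
  simp only [mul_zero, sub_zero, div_one, zero_sub] at hlim
  refine hlim.congr' ?_
  filter_upwards [Ioo_mem_nhdsGT pi_pos] with x ⟨hx0, hxπ⟩
  have hs : sin (x / 2) ≠ 0 := (sin_pos_of_pos_of_lt_pi (by linarith) (by linarith)).ne'
  have hc : cos (x / 2) ≠ 0 := (cos_pos_of_mem_Ioo ⟨by linarith, by linarith⟩).ne'
  have hsx : sin x = 2 * sin (x / 2) * cos (x / 2) := by rw [← sin_two_mul]; ring_nf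
  simp only [Function.comp, Pi.div_apply, sinRatio, hsx, sin_sub, sin_pi_div_four, cos_pi_div_four]
  field_simp
  ring

theorem Filter.Tendsto.sub_comp_of_inv_sub_inv_eq {α : Type*} {l : Filter α} {l' : Filter ℝ}
    {F : ℝ → ℝ} {C L d : ℝ} {a c : α → ℝ} (hF : Tendsto (fun x => F x - C / x) l' (𝓝 L))
    (ha : Tendsto a l l') (hc : Tendsto c l l') (hd : ∀ i, (a i)⁻¹ - (c i)⁻¹ = d) :
    Tendsto (fun i => F (a i) - F (c i)) l (𝓝 (C * d)) := by
  have h := ((hF.comp ha).sub (hF.comp hc)).add_const (C * d)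
  rw [sub_self, zero_add] at h
  refine h.congr fun i => ?_
  simp only [Function.comp, ← hd i]
  ring

theorem tendsto_div_mul_add_nhdsGT {C p q : ℝ} (hC : 0 < C) (hp : 0 < p) (hq : 0 < q) :
    Tendsto (fun m : ℕ => C / (p * m + q)) atTop (𝓝[>] 0) :=
  tendsto_nhdsWithin_iff.2 ⟨tendsto_const_nhds.div_atTop
    (tendsto_atTop_add_const_right _ q (tendsto_natCast_atTop_atTop.const_mul_atTop hp)),
    Eventually.of_forall fun _ => Set.mem_Ioi.2 (by positivity)⟩

theorem tendsto_two_add_sinRatio_sub :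
    Tendsto (fun m : ℕ => 2 + 2 * (sinRatio (π / (8 * m + 2)) - sinRatio (π / (8 * m + 6)))
        + 2 * (sin (π / (8 * m + 2)) / (1 + cos (π / (8 * m + 2)))))
      atTop (𝓝 ((8 - 8 * √2 + 2 * π) / π)) := by
  have ha := tendsto_div_mul_add_nhdsGT (p := 8) (q := 2) pi_pos (by norm_num) (by norm_num)
  have hc := tendsto_div_mul_add_nhdsGT (p := 8) (q := 6) pi_pos (by norm_num) (by norm_num)
  have hinv (m : ℕ) : (π / (8 * m + 2))⁻¹ - (π / (8 * m + 6))⁻¹ = -4 / π := by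
    rw [inv_div, inv_div]; field_simp; ring
  have hsin_div : Tendsto (fun x => sin x / (1 + cos x)) (𝓝 0) (𝓝 0) := by
    have h := (continuous_sin.tendsto 0).div
      ((continuous_const.add continuous_cos).tendsto 0) (by norm_num : (1 : ℝ) + cos 0 ≠ 0)
    rwa [sin_zero, zero_div] at h
  have hdiff := tendsto_sinRatio_sub_inv.sub_comp_of_inv_sub_inv_eq ha hc hinv
  have hlim := ((hdiff.const_mul 2).const_add 2).add
    ((hsin_div.comp (ha.mono_right nhdsWithin_le_nhds)).const_mul 2)
  rw [show (8 - 8 * √2 + 2 * π) / π = 2 + 2 * ((√2 - 1) * (-4 / π)) + 2 * 0 by field_simp; ring]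
  exact hlim

theorem stmt8 :
    Tendsto (fun m : ℕ =>
      (4 : ℝ) *
        ((∑ k ∈ Finset.Icc 1 ((4 * m + 2 - 2) / 4),
            (Real.cos ((2 * (k : ℝ) - 1) * Real.pi / (2 * (4 * (m : ℝ) + 2) - 2)) -
              Real.cos ((k : ℝ) * Real.pi / ((4 * (m : ℝ) + 2) + 1)))) +
          ∑ k ∈ Finset.Icc ((4 * m + 2 + 2) / 4) ((4 * m + 2) / 2),
            (Real.cos ((k : ℝ) * Real.pi / ((4 * (m : ℝ) + 2) + 1)) -
              Real.cos ((2 * (k : ℝ) - 1) * Real.pi / (2 * (4 * (m : ℝ) + 2) - 2)))))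
      atTop (nhds ((8 - 8 * Real.sqrt 2 + 2 * Real.pi) / Real.pi)) := by
  refine tendsto_two_add_sinRatio_sub.congr fun m => ?_
  rw [show (4 * m + 2 - 2) / 4 = m by omega, show (4 * m + 2 + 2) / 4 = m + 1 by omega,
    show (4 * m + 2) / 2 = 2 * m + 1 by omega, sum_sub_distrib, sum_sub_distrib,
    sum_Icc_add_one_eq_sub _ (show m ≤ 2 * m + 1 by omega),
    sum_Icc_add_one_eq_sub _ (show m ≤ 2 * m + 1 by omega)]
  have hodd (k : ℕ) :
      (2 * (k : ℝ) - 1) * π / (2 * (4 * m + 2) - 2) = (2 * k - 1) * (π / (8 * m + 2)) := by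
    ring
  have heven (k : ℕ) : (k : ℝ) * π / (4 * m + 2 + 1) = 2 * k * (π / (8 * m + 6)) := by
    field_simp; ring
  simp only [hodd, heven]
  linear_combination (-4) * two_mul_sum_cos_odd_sub m (a := π / (8 * m + 2)) (by field_simp)
    - 4 * sum_cos_even_sub_two_mul m (c := π / (8 * m + 6)) (by field_simp)
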